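/- arXiv:2509.04296 — 5 statements merged into one kernel-verified Lean document; each statement's English description precedes it below -/
import Mathlib

section
/- For every base arm a ∈ A, the base optimality gap satisfies Δ(a) ≤ Δ'(ω(a)) + 2(s+e) − Δ'(ω(a₁)). -/
/-- **AT-UCB, Lemma 2 (optimality-gap bound).**
For every base arm `a`, the base optimality gap satisfies
`Δ(a) ≤ Δ'(ω(a)) + 2(s+e) − Δ'(ω(a₁))`. -/
theorem base_gap_le_abstract_gap
    {A A' : Type*} [Fintype A] [Nonempty A] [Fintype A'] [Nonempty A']
    (ω : A → A') (μ : A → ℝ) (μ' : A' → ℝ) (s e : ℝ)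
    (hs : 0 ≤ s) (he : 0 ≤ e)
    (habs : ∀ a : A, |μ a - μ' (ω a)| ≤ s + e)
    (a₁ : A) (ha₁ : ∀ a : A, μ a ≤ μ a₁)
    (a₁' : A') (ha₁' : ∀ a' : A', μ' a' ≤ μ' a₁')
    (a : A) :
    (μ a₁ - μ a) ≤ (μ' a₁' - μ' (ω a)) + 2 * (s + e) - (μ' a₁' - μ' (ω a₁)) := by
  have h1 := habs a₁; have h2 := habs a
  rw [abs_sub_le_iff] at h1 h2
  linarith [h1.1, h1.2, h2.1, h2.2]
end

section
/- If there exists a base arm mapping to the abstract optimal arm (i.e., some a ∈ A with ω(a) = a₁'), then μ'(a₁') − 2(s+e) ≤ μ'(ω(a₁)) ≤ μ'(a₁'). -/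
/-- **AT-UCB, Proposition 1.**
If some base arm maps to the abstract optimal arm, then
`μ'(a₁') − 2(s+e) ≤ μ'(ω(a₁)) ≤ μ'(a₁')`. -/
theorem abstract_mean_of_optimal_base_arm_bounds
    {A A' : Type*} [Fintype A] [Nonempty A] [Fintype A'] [Nonempty A']
    (ω : A → A') (μ : A → ℝ) (μ' : A' → ℝ) (s e : ℝ)
    (hs : 0 ≤ s) (he : 0 ≤ e)
    (habs : ∀ a : A, |μ a - μ' (ω a)| ≤ s + e)
    (a₁ : A) (ha₁ : ∀ a : A, μ a ≤ μ a₁)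
    (a₁' : A') (ha₁' : ∀ a' : A', μ' a' ≤ μ' a₁')
    (hsurj : ∃ a : A, ω a = a₁') :
    μ' a₁' - 2 * (s + e) ≤ μ' (ω a₁) ∧ μ' (ω a₁) ≤ μ' a₁' := by
  obtain ⟨a, ha⟩ := hsurj
  have h1 := abs_le.mp (habs a)
  have h2 := abs_le.mp (habs a₁)
  constructor
  · have := ha₁ a
    rw [← ha]
    linarith [h1.1, h1.2, h2.1, h2.2]
  · exact ha₁' _
end

section
/- For every base arm a ∈ A with ω(a) = a₁', the base optimality gap satisfies Δ(a) ≤ 2(s+e) − Δ'(ω(a₁)). -/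
/-- **AT-UCB, step in proof of Proposition 1.**
For every base arm `a` with `ω(a) = a₁'`, the base optimality gap satisfies
`Δ(a) ≤ 2(s+e) − Δ'(ω(a₁))`. -/
theorem base_gap_le_of_maps_to_abstract_optimal
    {A A' : Type*} [Fintype A] [Nonempty A] [Fintype A'] [Nonempty A']
    (ω : A → A') (μ : A → ℝ) (μ' : A' → ℝ) (s e : ℝ)
    (hs : 0 ≤ s) (he : 0 ≤ e)
    (habs : ∀ a : A, |μ a - μ' (ω a)| ≤ s + e)
    (a₁ : A) (ha₁ : ∀ a : A, μ a ≤ μ a₁)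
    (a₁' : A') (ha₁' : ∀ a' : A', μ' a' ≤ μ' a₁')
    (a : A) (ha : ω a = a₁') :
    (μ a₁ - μ a) ≤ 2 * (s + e) - (μ' a₁' - μ' (ω a₁)) := by
  have h1 := abs_le.mp (habs a₁)
  have h2 := abs_le.mp (habs a)
  rw [ha] at h2
  linarith [h1.2, h2.1]
end

section
/- Define the set of filtered abstract arms D = {a' ∈ A' : μ'(a') < μ'(a₁') − 2(s+e)}. If there exists a base arm mapping to the abstract optimal arm (i.e., some a ∈ A with ω(a) = a₁'), then ω(a₁) ∉ D; equivalently, the optimal base arm a₁ lies in ω⁻¹(Dᶜ). -/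
/-- **AT-UCB: the optimal base arm is not filtered out.**
With `D = {a' : μ'(a') < μ'(a₁') − 2(s+e)}`, if some base arm maps to the abstract
optimal arm, then `ω(a₁) ∉ D`, i.e. `a₁ ∈ ω ⁻¹(Dᶜ)`. -/
theorem optimal_base_arm_not_filtered
    {A A' : Type*} [Fintype A] [Nonempty A] [Fintype A'] [Nonempty A']
    (ω : A → A') (μ : A → ℝ) (μ' : A' → ℝ) (s e : ℝ)
    (hs : 0 ≤ s) (he : 0 ≤ e)
    (habs : ∀ a : A, |μ a - μ' (ω a)| ≤ s + e)
    (a₁ : A) (ha₁ : ∀ a : A, μ a ≤ μ a₁)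
    (a₁' : A') (ha₁' : ∀ a' : A', μ' a' ≤ μ' a₁')
    (hsurj : ∃ a : A, ω a = a₁')
    (D : Set A') (hD : D = {a' : A' | μ' a' < μ' a₁' - 2 * (s + e)}) :
    ω a₁ ∉ D ∧ a₁ ∈ ω ⁻¹' Dᶜ := by
  obtain ⟨a, ha⟩ := hsurj
  have h1 := abs_le.mp (habs a₁)
  have h2 := abs_le.mp (habs a)
  have h3 := ha₁ a
  rw [ha] at h2
  have : ¬ ω a₁ ∈ D := by
    rw [hD]
    simp only [Set.mem_setOf_eq, not_lt]
    linarith [h1.1, h1.2, h2.1, h2.2]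
  exact ⟨this, this⟩
end

section
/- Suppose ε > Δ'(b), D is nonempty, n'·(ε − Δ'(b))² ≥ 4k'·log(n·k'), and n'·(Δ'(a') − ε)² ≥ 4k'·log(n·k') for every a' ∈ D. Then Σ_{a' ∈ A'} exp(−(n'/(4k'))·(ε + Δ'(a') − Δ'(b))²) + Σ_{a' ∈ D} exp(−(n'/(4k'))·(Δ'(a') − ε)²) ≤ 2/n. -/
open Real Finset

/-- **AT-UCB, Lemma 3.** Under the abstract-horizon assumption, the sum of the two
Chernoff-type exponential terms is at most `2/n`. -/
theorem sum_exps_le_two_div_n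
    {A' : Type*} [Fintype A'] [Nonempty A']
    (k' : ℕ) (hk' : k' = Fintype.card A')
    (Δ' : A' → ℝ) (hΔ' : ∀ a' : A', 0 ≤ Δ' a')
    (b : A') (ε : ℝ) (hε : 0 < ε) (hεb : ε > Δ' b)
    (D : Finset A') (hD : D = Finset.univ.filter (fun a' : A' => Δ' a' > ε))
    (hDne : D.Nonempty)
    (n : ℕ) (hn : 1 ≤ n) (n' : ℝ) (hn' : 0 < n')
    (h₁ : n' * (ε - Δ' b) ^ 2 ≥ 4 * k' * Real.log (n * k'))
    (h₂ : ∀ a' ∈ D, n' * (Δ' a' - ε) ^ 2 ≥ 4 * k' * Real.log (n * k')) :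
    (∑ a' : A', Real.exp (-(n' / (4 * k')) * (ε + Δ' a' - Δ' b) ^ 2))
      + (∑ a' ∈ D, Real.exp (-(n' / (4 * k')) * (Δ' a' - ε) ^ 2))
      ≤ 2 / n := by
  have hk1 : 1 ≤ k' := by
    rw [hk']; exact Fintype.card_pos
  have hkpos : (0:ℝ) < (k' : ℝ) := by exact_mod_cast hk1
  have hnpos : (0:ℝ) < (n : ℝ) := by exact_mod_cast hn
  have hnk : (0:ℝ) < (n : ℝ) * (k' : ℝ) := mul_pos hnpos hkpos
  have key : ∀ y : ℝ, n' * y ≥ 4 * k' * Real.log (n * k') →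
      Real.exp (-(n' / (4 * k')) * y) ≤ 1 / ((n : ℝ) * k') := by
    intro y hy
    have h4k : (0:ℝ) < 4 * k' := by positivity
    have : -(n' / (4 * k')) * y ≤ -Real.log (n * k') := by
      rw [neg_mul, neg_le_neg_iff, div_mul_eq_mul_div, le_div_iff₀ h4k]
      linarith
    calc Real.exp (-(n' / (4 * k')) * y) ≤ Real.exp (-Real.log (n * k')) :=
          Real.exp_le_exp.mpr this
      _ = 1 / ((n : ℝ) * k') := by
          rw [Real.exp_neg, Real.exp_log hnk, one_div]
  have hsum1 : (∑ a' : A', Real.exp (-(n' / (4 * k')) * (ε + Δ' a' - Δ' b) ^ 2))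
      ≤ 1 / n := by
    calc (∑ a' : A', Real.exp (-(n' / (4 * k')) * (ε + Δ' a' - Δ' b) ^ 2))
        ≤ ∑ _a' : A', 1 / ((n : ℝ) * k') := by
          apply Finset.sum_le_sum
          intro a' _
          apply key
          have h0 : 0 ≤ ε - Δ' b := le_of_lt (sub_pos.mpr hεb)
          have hle : (ε - Δ' b) ^ 2 ≤ (ε + Δ' a' - Δ' b) ^ 2 := by
            apply pow_le_pow_left₀ h0
            linarith [hΔ' a']
          calc 4 * (k':ℝ) * Real.log (n * k') ≤ n' * (ε - Δ' b) ^ 2 := h₁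
            _ ≤ n' * (ε + Δ' a' - Δ' b) ^ 2 := by
                exact mul_le_mul_of_nonneg_left hle (le_of_lt hn')
      _ = (k' : ℝ) * (1 / ((n : ℝ) * k')) := by
          rw [Finset.sum_const, Finset.card_univ, ← hk', nsmul_eq_mul]
      _ = 1 / n := by field_simp
  have hsum2 : (∑ a' ∈ D, Real.exp (-(n' / (4 * k')) * (Δ' a' - ε) ^ 2))
      ≤ 1 / n := by
    calc (∑ a' ∈ D, Real.exp (-(n' / (4 * k')) * (Δ' a' - ε) ^ 2))
        ≤ ∑ _a' ∈ D, 1 / ((n : ℝ) * k') :=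
          Finset.sum_le_sum (fun a' ha' => key _ (h₂ a' ha'))
      _ = (D.card : ℝ) * (1 / ((n : ℝ) * k')) := by
          rw [Finset.sum_const, nsmul_eq_mul]
      _ ≤ (k' : ℝ) * (1 / ((n : ℝ) * k')) := by
          apply mul_le_mul_of_nonneg_right _ (by positivity)
          have : D.card ≤ Fintype.card A' := Finset.card_le_univ D
          exact_mod_cast hk' ▸ this
      _ = 1 / n := by field_simp
  have : (1:ℝ)/n + 1/n = 2/n := by ring
  linarith
end
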